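/- Fix n ≥ 2 and two distinct indices e₁, e₂ ∈ {1,…,n}. Let f be the randomized mechanism for n agents in the Euclidean plane that, given a profile x ∈ (ℝ²)ⁿ, returns the midpoint (x_{e₁}+x_{e₂})/2 with probability 1/2, the point x_{e₁} with probability 1/4, and the point x_{e₂} with probability 1/4. Then: (i) f is truthful in expectation; (ii) for every profile x, C(f,x) ≤ 2·opt(x); and (iii) for every profile x in which all n agents lie in the closed disk having the segment from x_{e₁} to x_{e₂} as a diameter (i.e., the prediction that e₁ and e₂ are the two extreme agents is correct), opt(x) = ‖x_{e₁}−x_{e₂}‖/2 and C(f,x) ≤ 1.5·opt(x). -/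

import Mathlib

/-!
The expected cost of the mechanism is a weighted average over the three points `x e₁`, `x e₂`
and their midpoint `m`. The egalitarian cost `y ↦ maxᵢ dist y (x i)` is 1-Lipschitz and each of
the three points lies within `opt` of an optimal location, so each of them costs at most
`2 opt`. When all agents lie in the disk with diameter `[x e₁, x e₂]`, `m` is optimal with
cost `opt = dist (x e₁) (x e₂) / 2`, and `x e₁`, `x e₂` cost at most `2 opt`, giving
`opt / 2 + opt / 2 + opt / 2`. Truthfulness reduces to the triangle inequality through the
reported midpoint.
-/

open MeasureTheory

/-- The randomized mechanism for `n` agents in the Euclidean plane that, given the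
(predicted) extreme agents `e₁, e₂`, returns the midpoint of `x e₁` and `x e₂` with
probability `1/2` and each of `x e₁`, `x e₂` with probability `1/4`. -/
noncomputable def twoExtremeMech (n : ℕ) (e₁ e₂ : Fin n)
    (x : Fin n → EuclideanSpace ℝ (Fin 2)) : Measure (EuclideanSpace ℝ (Fin 2)) :=
  (1 / 2 : ENNReal) • Measure.dirac (midpoint ℝ (x e₁) (x e₂))
    + (1 / 4 : ENNReal) • Measure.dirac (x e₁)
    + (1 / 4 : ENNReal) • Measure.dirac (x e₂)

section MaxDist

variable {ι X : Type*} [Finite ι] [PseudoMetricSpace X] {x : ι → X}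

theorem dist_le_ciSup_dist (y : X) (i : ι) : dist y (x i) ≤ ⨆ k, dist y (x k) :=
  le_ciSup (f := fun k => dist y (x k)) (Set.finite_range _).bddAbove i

theorem ciSup_dist_le_dist_add [Nonempty ι] (z y : X) :
    ⨆ k, dist z (x k) ≤ dist z y + ⨆ k, dist y (x k) :=
  ciSup_le fun k => (dist_triangle z y (x k)).trans (by gcongr; exact dist_le_ciSup_dist y k)

theorem half_dist_le_ciSup_dist (y : X) (i j : ι) :
    dist (x i) (x j) / 2 ≤ ⨆ k, dist y (x k) := by
  have := dist_triangle_left (x i) (x j) y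
  linarith [dist_le_ciSup_dist (x := x) y i, dist_le_ciSup_dist (x := x) y j]

end MaxDist

section Midpoint

variable {ι E : Type*} [Finite ι] [NormedAddCommGroup E] [NormedSpace ℝ E] {x : ι → E}

theorem dist_midpoint_le_ciSup_dist (y : E) (i j : ι) :
    dist (midpoint ℝ (x i) (x j)) y ≤ ⨆ k, dist y (x k) := by
  have := dist_midpoint_midpoint_le (x i) (x j) y y
  rw [midpoint_self, dist_comm (x i), dist_comm (x j)] at this
  linarith [dist_le_ciSup_dist (x := x) y i, dist_le_ciSup_dist (x := x) y j]

theorem iInf_ciSup_dist_eq_half_dist {i j : ι}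
    (h : ∀ k, dist (x k) (midpoint ℝ (x i) (x j)) ≤ dist (x i) (x j) / 2) :
    ⨅ y, ⨆ k, dist y (x k) = dist (x i) (x j) / 2 := by
  have : Nonempty ι := ⟨i⟩
  refine le_antisymm ?_ (le_ciInf fun y => half_dist_le_ciSup_dist y i j)
  refine (ciInf_le ⟨dist (x i) (x j) / 2, ?_⟩ (midpoint ℝ (x i) (x j))).trans ?_
  · rintro _ ⟨y, rfl⟩
    exact half_dist_le_ciSup_dist y i j
  · exact ciSup_le fun k => dist_comm (x k) _ ▸ h k

/-- Truthfulness for the agent at `a = x e₁` who reports `c`: the expected extra distance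
`dist (midpoint ℝ c b) a / 2 + dist c a / 4 - dist a b / 4` is nonnegative. -/
theorem dist_le_two_mul_dist_midpoint_add_dist (a b c : E) :
    dist a b ≤ 2 * dist (midpoint ℝ c b) a + dist c a := by
  have hm : dist (midpoint ℝ c b) b = dist c b / 2 := by
    rw [dist_midpoint_right, Real.norm_two]; ring
  have := dist_triangle_left a b (midpoint ℝ c b)
  have := dist_triangle c a b
  linarith [dist_comm a c]

end Midpoint

section Mechanism

local notation "Pt" => EuclideanSpace ℝ (Fin 2)

variable {n : ℕ} {e₁ e₂ : Fin n}

theorem integral_twoExtremeMech (g : Pt → ℝ) (x : Fin n → Pt) :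
    ∫ y, g y ∂(twoExtremeMech n e₁ e₂ x)
      = 1 / 2 * g (midpoint ℝ (x e₁) (x e₂)) + 1 / 4 * g (x e₁) + 1 / 4 * g (x e₂) := by
  have hg (p : Pt) : Integrable g (Measure.dirac p) := integrable_dirac enorm_lt_top
  have h2 : (1 / 2 : ENNReal) ≠ ⊤ := by simp
  have h4 : (1 / 4 : ENNReal) ≠ ⊤ := by simp
  rw [twoExtremeMech,
    integral_add_measure (((hg _).smul_measure h2).add_measure ((hg _).smul_measure h4))
      ((hg _).smul_measure h4),
    integral_add_measure ((hg _).smul_measure h2) ((hg _).smul_measure h4)]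
  simp only [integral_smul_measure, integral_dirac, ENNReal.toReal_div, smul_eq_mul]
  norm_num

theorem twoExtremeMech_truthful (hee : e₁ ≠ e₂) (x : Fin n → Pt) (i : Fin n) (x' : Pt) :
    ∫ y, dist y (x i) ∂(twoExtremeMech n e₁ e₂ x)
      ≤ ∫ y, dist y (x i) ∂(twoExtremeMech n e₁ e₂ (Function.update x i x')) := by
  simp only [integral_twoExtremeMech]
  by_cases h₁ : i = e₁
  · subst h₁
    rw [Function.update_self, Function.update_of_ne hee.symm, dist_midpoint_left,
      Real.norm_two, dist_self]
    linarith [dist_le_two_mul_dist_midpoint_add_dist (x i) (x e₂) x', dist_comm (x i) (x e₂)]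
  by_cases h₂ : i = e₂
  · subst h₂
    rw [Function.update_self, Function.update_of_ne hee, dist_midpoint_right,
      Real.norm_two, dist_self, midpoint_comm]
    linarith [dist_le_two_mul_dist_midpoint_add_dist (x i) (x e₁) x', dist_comm (x i) (x e₁)]
  rw [Function.update_of_ne (Ne.symm h₁), Function.update_of_ne (Ne.symm h₂)]

theorem twoExtremeMech_cost_le_two_mul (x : Fin n → Pt) :
    ∫ y, (⨆ i, dist y (x i)) ∂(twoExtremeMech n e₁ e₂ x)
      ≤ 2 * ⨅ y : Pt, ⨆ i, dist y (x i) := by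
  have : Nonempty (Fin n) := ⟨e₁⟩
  rw [integral_twoExtremeMech]
  have hcost (y : Pt) : (1 / 2 * ⨆ i, dist (midpoint ℝ (x e₁) (x e₂)) (x i))
      + 1 / 4 * (⨆ i, dist (x e₁) (x i)) + 1 / 4 * (⨆ i, dist (x e₂) (x i))
      ≤ 2 * ⨆ i, dist y (x i) := by
    have := ciSup_dist_le_dist_add (x := x) (midpoint ℝ (x e₁) (x e₂)) y
    have := ciSup_dist_le_dist_add (x := x) (x e₁) y
    have := ciSup_dist_le_dist_add (x := x) (x e₂) y
    linarith [dist_midpoint_le_ciSup_dist (x := x) y e₁ e₂, dist_comm (x e₁) y,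
      dist_comm (x e₂) y, dist_le_ciSup_dist (x := x) y e₁, dist_le_ciSup_dist (x := x) y e₂]
  linarith [le_ciInf fun y => (div_le_iff₀' two_pos).2 (hcost y)]

theorem twoExtremeMech_cost_le_of_dist_midpoint_le (x : Fin n → Pt)
    (h : ∀ j, dist (x j) (midpoint ℝ (x e₁) (x e₂)) ≤ dist (x e₁) (x e₂) / 2) :
    ∫ y, (⨆ i, dist y (x i)) ∂(twoExtremeMech n e₁ e₂ x)
      ≤ 1.5 * ⨅ y : Pt, ⨆ i, dist y (x i) := by
  have : Nonempty (Fin n) := ⟨e₁⟩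
  rw [integral_twoExtremeMech, iInf_ciSup_dist_eq_half_dist h]
  have hm : ⨆ i, dist (midpoint ℝ (x e₁) (x e₂)) (x i) ≤ dist (x e₁) (x e₂) / 2 :=
    ciSup_le fun k => dist_comm (x k) _ ▸ h k
  have := ciSup_dist_le_dist_add (x := x) (x e₁) (midpoint ℝ (x e₁) (x e₂))
  have := ciSup_dist_le_dist_add (x := x) (x e₂) (midpoint ℝ (x e₁) (x e₂))
  linarith [h e₁, h e₂]

end Mechanism

theorem stmt15_general (n : ℕ) (e₁ e₂ : Fin n) (hee : e₁ ≠ e₂) :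
    -- (i) truthful in expectation
    (∀ (x : Fin n → EuclideanSpace ℝ (Fin 2)) (i : Fin n)
        (x' : EuclideanSpace ℝ (Fin 2)),
      ∫ y, dist y (x i) ∂(twoExtremeMech n e₁ e₂ x)
        ≤ ∫ y, dist y (x i) ∂(twoExtremeMech n e₁ e₂ (Function.update x i x'))) ∧
    -- (ii) 2-robustness
    (∀ x : Fin n → EuclideanSpace ℝ (Fin 2),
      ∫ y, (⨆ i, dist y (x i)) ∂(twoExtremeMech n e₁ e₂ x)
        ≤ 2 * ⨅ y : EuclideanSpace ℝ (Fin 2), ⨆ i, dist y (x i)) ∧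
    -- (iii) 1.5-consistency when the extreme-agent prediction is correct
    (∀ x : Fin n → EuclideanSpace ℝ (Fin 2),
      (∀ j, dist (x j) (midpoint ℝ (x e₁) (x e₂)) ≤ dist (x e₁) (x e₂) / 2) →
      (⨅ y : EuclideanSpace ℝ (Fin 2), ⨆ i, dist y (x i)) = dist (x e₁) (x e₂) / 2 ∧
      ∫ y, (⨆ i, dist y (x i)) ∂(twoExtremeMech n e₁ e₂ x)
        ≤ 1.5 * ⨅ y : EuclideanSpace ℝ (Fin 2), ⨆ i, dist y (x i)) :=
  ⟨twoExtremeMech_truthful hee, twoExtremeMech_cost_le_two_mul,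
    fun x h => ⟨iInf_ciSup_dist_eq_half_dist h, twoExtremeMech_cost_le_of_dist_midpoint_le x h⟩⟩

/-- the mechanism `twoExtremeMech` (i) is truthful in expectation,
(ii) is 2-robust (cost at most `2·opt(x)` on every profile), and (iii) on profiles where
the prediction is correct, i.e. all agents lie in the closed disk with the segment from
`x e₁` to `x e₂` as a diameter, `opt(x) = ‖x e₁ - x e₂‖/2` and the cost is at most
`1.5·opt(x)`. -/
theorem stmt15 (n : ℕ) (hn : 2 ≤ n) (e₁ e₂ : Fin n) (hee : e₁ ≠ e₂) :
    -- (i) truthful in expectation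
    (∀ (x : Fin n → EuclideanSpace ℝ (Fin 2)) (i : Fin n)
        (x' : EuclideanSpace ℝ (Fin 2)),
      ∫ y, dist y (x i) ∂(twoExtremeMech n e₁ e₂ x)
        ≤ ∫ y, dist y (x i) ∂(twoExtremeMech n e₁ e₂ (Function.update x i x'))) ∧
    -- (ii) 2-robustness
    (∀ x : Fin n → EuclideanSpace ℝ (Fin 2),
      ∫ y, (⨆ i, dist y (x i)) ∂(twoExtremeMech n e₁ e₂ x)
        ≤ 2 * ⨅ y : EuclideanSpace ℝ (Fin 2), ⨆ i, dist y (x i)) ∧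
    -- (iii) 1.5-consistency when the extreme-agent prediction is correct
    (∀ x : Fin n → EuclideanSpace ℝ (Fin 2),
      (∀ j, dist (x j) (midpoint ℝ (x e₁) (x e₂)) ≤ dist (x e₁) (x e₂) / 2) →
      (⨅ y : EuclideanSpace ℝ (Fin 2), ⨆ i, dist y (x i)) = dist (x e₁) (x e₂) / 2 ∧
      ∫ y, (⨆ i, dist y (x i)) ∂(twoExtremeMech n e₁ e₂ x)
        ≤ 1.5 * ⨅ y : EuclideanSpace ℝ (Fin 2), ⨆ i, dist y (x i)) :=
  stmt15_general n e₁ e₂ hee
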